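/- Let A ∈ ℝ^{N×N} be a signed adjacency matrix that is structurally balanced with signature d, and assume the underlying graph of A is connected. Then the signed Laplacian L_s has rank N − 1. -/

import Mathlib

/-!
Conjugating by the signature `D = diagonal d` (so `D⁻¹ = D`) turns the signed Laplacian of a
structurally balanced `A` into the ordinary Laplacian of the nonnegative weights `|aᵢⱼ|`, without
changing the rank. For nonnegative symmetric weights `W`, `2 xᵀ L_W x = ∑ᵢⱼ wᵢⱼ (xᵢ - xⱼ)²`, so a
kernel vector is constant along every edge, hence constant on a connected graph: the kernel is
spanned by the all-ones vector and the rank is `N - 1`.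
-/

open Matrix

namespace SimpleGraph

theorem Preconnected.apply_eq_of_forall_adj {V α : Type*} {G : SimpleGraph V}
    (hG : G.Preconnected) {f : V → α} (hf : ∀ u v, G.Adj u v → f u = f v) (u v : V) :
    f u = f v := by
  obtain ⟨w⟩ := hG u v
  induction w with
  | nil => rfl
  | cons hadj _ ih => exact (hf _ _ hadj).trans ih

end SimpleGraph

namespace Matrix

variable {ι : Type*} [Fintype ι] [DecidableEq ι]

def weightedLaplacian (W : Matrix ι ι ℝ) : Matrix ι ι ℝ :=
  diagonal (fun i => ∑ k, W i k) - W

def signedLaplacian (A : Matrix ι ι ℝ) : Matrix ι ι ℝ :=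
  of fun i j => if i = j then ∑ k, |A i k| else -A i j

section WeightedLaplacian

variable {W : Matrix ι ι ℝ}

theorem weightedLaplacian_mulVec_apply (W : Matrix ι ι ℝ) (x : ι → ℝ) (i : ι) :
    (weightedLaplacian W *ᵥ x) i = ∑ k, W i k * (x i - x k) := by
  rw [weightedLaplacian, sub_mulVec, Pi.sub_apply, mulVec_diagonal, Finset.sum_mul]
  simp only [mul_sub, Finset.sum_sub_distrib]
  rfl

theorem weightedLaplacian_mulVec_const (W : Matrix ι ι ℝ) (c : ℝ) :
    weightedLaplacian W *ᵥ (fun _ => c) = 0 := by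
  ext i
  simp [weightedLaplacian_mulVec_apply]

theorem dotProduct_weightedLaplacian_mulVec (W : Matrix ι ι ℝ) (x : ι → ℝ) :
    x ⬝ᵥ (weightedLaplacian W *ᵥ x) = ∑ i, ∑ k, W i k * x i * (x i - x k) := by
  simp only [dotProduct, weightedLaplacian_mulVec_apply, Finset.mul_sum]
  exact Finset.sum_congr rfl fun i _ => Finset.sum_congr rfl fun k _ => by ring

theorem two_mul_dotProduct_weightedLaplacian_mulVec (hW : W.IsSymm) (x : ι → ℝ) :
    2 * (x ⬝ᵥ (weightedLaplacian W *ᵥ x)) = ∑ i, ∑ k, W i k * (x i - x k) ^ 2 := by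
  have hswap : ∑ i, ∑ k, W i k * x i * (x i - x k) = ∑ i, ∑ k, W i k * x k * (x k - x i) := by
    rw [Finset.sum_comm]
    simp_rw [hW.apply]
  rw [dotProduct_weightedLaplacian_mulVec, two_mul]
  nth_rewrite 2 [hswap]
  simp only [← Finset.sum_add_distrib]
  exact Finset.sum_congr rfl fun i _ => Finset.sum_congr rfl fun k _ => by ring

theorem apply_eq_of_weightedLaplacian_mulVec_eq_zero (hW : W.IsSymm) (hW₀ : ∀ i j, 0 ≤ W i j)
    {x : ι → ℝ} (hx : weightedLaplacian W *ᵥ x = 0) {i j : ι} (hij : W i j ≠ 0) : x i = x j := by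
  have hterm_nonneg : ∀ i k, 0 ≤ W i k * (x i - x k) ^ 2 := fun i k =>
    mul_nonneg (hW₀ i k) (sq_nonneg _)
  have hsum : ∑ i, ∑ k, W i k * (x i - x k) ^ 2 = 0 := by
    rw [← two_mul_dotProduct_weightedLaplacian_mulVec hW, hx, dotProduct_zero, mul_zero]
  have hterm : W i j * (x i - x j) ^ 2 = 0 := by
    rw [Finset.sum_eq_zero_iff_of_nonneg fun i _ => Finset.sum_nonneg fun k _ =>
      hterm_nonneg i k] at hsum
    exact (Finset.sum_eq_zero_iff_of_nonneg fun k _ => hterm_nonneg i k).mp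
      (hsum i (Finset.mem_univ i)) j (Finset.mem_univ j)
  rw [mul_eq_zero, sq_eq_zero_iff, sub_eq_zero] at hterm
  exact hterm.resolve_left hij

theorem ker_weightedLaplacian (hW : W.IsSymm) (hW₀ : ∀ i j, 0 ≤ W i j)
    (hconn : (SimpleGraph.fromRel fun i j => W i j ≠ 0).Connected) :
    LinearMap.ker (weightedLaplacian W).mulVecLin = Submodule.span ℝ {fun _ => 1} := by
  refine le_antisymm (fun x hx => ?_) ?_
  · obtain ⟨i₀⟩ := hconn.nonempty
    have hconst : ∀ i, x i = x i₀ := fun i => hconn.preconnected.apply_eq_of_forall_adj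
      (fun _ _ hadj => hadj.2.elim (apply_eq_of_weightedLaplacian_mulVec_eq_zero hW hW₀ hx)
        fun hji => (apply_eq_of_weightedLaplacian_mulVec_eq_zero hW hW₀ hx hji).symm) i i₀
    have : x = x i₀ • fun _ => 1 := funext fun i => by simpa using hconst i
    rw [this]
    exact Submodule.smul_mem _ _ (Submodule.mem_span_singleton_self _)
  · rw [Submodule.span_le, Set.singleton_subset_iff]
    exact weightedLaplacian_mulVec_const W 1

theorem rank_weightedLaplacian (hW : W.IsSymm) (hW₀ : ∀ i j, 0 ≤ W i j)
    (hconn : (SimpleGraph.fromRel fun i j => W i j ≠ 0).Connected) :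
    (weightedLaplacian W).rank = Fintype.card ι - 1 := by
  obtain ⟨i₀⟩ := hconn.nonempty
  have hone : (fun _ => (1 : ℝ)) ≠ 0 := fun h => one_ne_zero (congrFun h i₀)
  have h := LinearMap.finrank_range_add_finrank_ker (weightedLaplacian W).mulVecLin
  rw [ker_weightedLaplacian hW hW₀ hconn, finrank_span_singleton hone,
    Module.finrank_fintype_fun_eq_card] at h
  rw [rank]
  omega

end WeightedLaplacian

section SignedLaplacian

variable {A : Matrix ι ι ℝ} {d : ι → ℝ}

theorem signedLaplacian_eq_diagonal_sub (hdiag : ∀ i, A i i = 0) :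
    signedLaplacian A = diagonal (fun i => ∑ k, |A i k|) - A := by
  ext i j
  by_cases h : i = j
  · subst h
    simp [signedLaplacian, hdiag]
  · simp [signedLaplacian, h]

theorem eq_diagonal_mul_map_abs_mul_diagonal (hd : ∀ i, d i = 1 ∨ d i = -1)
    (hbal : ∀ i j, 0 ≤ d i * A i j * d j) :
    A = diagonal d * A.map abs * diagonal d := by
  ext i j
  have hij := hbal i j
  rw [mul_diagonal, diagonal_mul, map_apply]
  rcases hd i with hi | hi <;> rcases hd j with hj | hj <;>
    simp only [hi, hj, one_mul, mul_one, neg_mul, mul_neg, neg_neg, neg_nonneg] at hij ⊢ <;>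
    simp [abs_of_nonneg, abs_of_nonpos, hij]

theorem signedLaplacian_eq_diagonal_mul_weightedLaplacian_mul_diagonal
    (hdiag : ∀ i, A i i = 0) (hd : ∀ i, d i = 1 ∨ d i = -1)
    (hbal : ∀ i j, 0 ≤ d i * A i j * d j) :
    signedLaplacian A = diagonal d * weightedLaplacian (A.map abs) * diagonal d := by
  have hdd : ∀ i, d i * d i = 1 := fun i => by rcases hd i with h | h <;> simp [h]
  rw [signedLaplacian_eq_diagonal_sub hdiag, weightedLaplacian, mul_sub, sub_mul,
    diagonal_mul_diagonal, diagonal_mul_diagonal, ← eq_diagonal_mul_map_abs_mul_diagonal hd hbal]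
  congr 2
  ext i
  simp only [map_apply]
  linear_combination -(∑ k, |A i k|) * hdd i

end SignedLaplacian

end Matrix

/-- For a structurally balanced signed adjacency matrix `A` whose
underlying graph is connected, the signed Laplacian has rank `N - 1`. -/
theorem signed_laplacian_SB_rank
    (N : ℕ) (A : Matrix (Fin N) (Fin N) ℝ)
    (hsym : A.IsSymm) (hdiag : ∀ i, A i i = 0)
    (d : Fin N → ℝ) (hd : ∀ i, d i = 1 ∨ d i = -1)
    (hbal : ∀ i j, 0 ≤ d i * A i j * d j)
    (hconn : (SimpleGraph.fromRel (fun i j : Fin N => A i j ≠ 0)).Connected)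
    (L : Matrix (Fin N) (Fin N) ℝ)
    (hL : ∀ i j, L i j = if i = j then ∑ k, |A i k| else -A i j) :
    L.rank = N - 1 := by
  have hL' : L = signedLaplacian A := Matrix.ext hL
  have hdet : (diagonal d).det ≠ 0 := by
    rw [det_diagonal, Finset.prod_ne_zero_iff]
    exact fun i _ => by rcases hd i with h | h <;> simp [h]
  rw [hL', signedLaplacian_eq_diagonal_mul_weightedLaplacian_mul_diagonal hdiag hd hbal,
    rank_mul_eq_left_of_det_ne_zero _ _ hdet, rank_mul_eq_right_of_det_ne_zero _ _ hdet,
    rank_weightedLaplacian (hsym.map abs) (fun _ _ => abs_nonneg _) (by simpa using hconn),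
    Fintype.card_fin]
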